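/- There exists a MAPF instance that admits a solution, but such that for every priority ordering ≺ on its agents there is no solution consistent with ≺; in other words, there exist solvable MAPF instances that are not P-solvable, so prioritized planning with an arbitrary priority ordering is incomplete for MAPF in general. -/

import Mathlib

/-- Two (space-time) paths have a vertex collision: same vertex at the same time. -/
def VCol {V : Type} (π σ : ℕ → V) : Prop := ∃ t, π t = σ t

/-- Two (space-time) paths have an edge collision: they traverse the same edge in
opposite directions at the same time. -/
def ECol {V : Type} (π σ : ℕ → V) : Prop := ∃ t, π t = σ (t + 1) ∧ π (t + 1) = σ t

/-- Two paths collide if they have a vertex collision or an edge collision. -/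
def Collide {V : Type} (π σ : ℕ → V) : Prop := VCol π σ ∨ ECol π σ

/-- `π : ℕ → V` is a path from `s` to `t` in `G`: it starts at `s`, at each time step
it stays put or moves along an edge of `G`, and it is eventually always at `t`. -/
def IsPathFun {V : Type} (G : SimpleGraph V) (s t : V) (π : ℕ → V) : Prop :=
  π 0 = s ∧ (∀ n, π (n + 1) = π n ∨ G.Adj (π n) (π (n + 1))) ∧ ∃ T, ∀ n ≥ T, π n = t

/-- The arrival time of a path at a target vertex `tgt`: the least time `T` such that
the path is at `tgt` at all times `≥ T`. -/
noncomputable def arrivalTime {V : Type} (tgt : V) (π : ℕ → V) : ℕ :=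
  sInf {T | ∀ n ≥ T, π n = tgt}

/-- A MAPF instance: a connected undirected graph and `M` agents with pairwise distinct
start vertices and pairwise distinct target vertices. -/
structure MAPF where
  V : Type
  G : SimpleGraph V
  conn : G.Connected
  M : ℕ
  s : Fin M → V
  t : Fin M → V
  s_inj : Function.Injective s
  t_inj : Function.Injective t

/-- `π` is a path for agent `i` of the MAPF instance `P`. -/
def MAPF.IsPath (P : MAPF) (i : Fin P.M) (π : ℕ → P.V) : Prop :=
  IsPathFun P.G (P.s i) (P.t i) π

/-- The arrival time of agent `i`'s path `π`. -/
noncomputable def MAPF.arr (P : MAPF) (i : Fin P.M) (π : ℕ → P.V) : ℕ :=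
  arrivalTime (P.t i) π

/-- A solution: a path for each agent such that no two paths collide. -/
def MAPF.Solution (P : MAPF) (π : Fin P.M → ℕ → P.V) : Prop :=
  (∀ i, P.IsPath i (π i)) ∧ ∀ i j, i ≠ j → ¬ Collide (π i) (π j)

/-- A priority ordering: a strict partial order (irreflexive and transitive relation)
on the agents. -/
def IsPO {M : ℕ} (r : Fin M → Fin M → Prop) : Prop :=
  (∀ i, ¬ r i i) ∧ ∀ i j k, r i j → r j k → r i k

/-- A total priority ordering: a strict total order on the agents. -/
def IsTotalPO {M : ℕ} (r : Fin M → Fin M → Prop) : Prop :=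
  IsPO r ∧ ∀ i j : Fin M, i ≠ j → r i j ∨ r j i

/-- A plan `π` is consistent with a priority ordering `r`: for every agent `i`, the
arrival time of `π i` is the minimum arrival time over all paths for agent `i` that
have no collision with `π j` for every higher-priority agent `j` (`r j i`). -/
def MAPF.Consistent (P : MAPF) (π : Fin P.M → ℕ → P.V)
    (r : Fin P.M → Fin P.M → Prop) : Prop :=
  ∀ i, IsLeast {T | ∃ σ, P.IsPath i σ ∧ (∀ j, r j i → ¬ Collide σ (π j)) ∧ P.arr i σ = T}
    (P.arr i (π i))

/-- A MAPF instance is P-solvable if it admits a solution consistent with some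
priority ordering. -/
def MAPF.PSolvable (P : MAPF) : Prop :=
  ∃ π r, IsPO r ∧ P.Solution π ∧ P.Consistent π r

/-- The flowtime of a plan: the sum of the arrival times of all agents. -/
noncomputable def MAPF.flowtime (P : MAPF) (π : Fin P.M → ℕ → P.V) : ℕ :=
  ∑ i, P.arr i (π i)

/-- The makespan of a plan: the maximum of the arrival times of all agents. -/
noncomputable def MAPF.makespan (P : MAPF) (π : Fin P.M → ℕ → P.V) : ℕ :=
  Finset.univ.sup fun i => P.arr i (π i)

/-- A MAPF instance is well-formed if every agent has a (finite) walk from its start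
vertex to its target vertex that visits neither the start vertex nor the target vertex
of any other agent. -/
def MAPF.WellFormed (P : MAPF) : Prop :=
  ∀ i, ∃ w : P.G.Walk (P.s i) (P.t i),
    ∀ j, j ≠ i → P.s j ∉ w.support ∧ P.t j ∉ w.support

/-!
On the star with centre `1` and leaves `0, 2, 3`, agent `0` travels `0 → 1` and agent `1`
travels `1 → 0`. They can swap by using the leaves `2` and `3` as parking spaces. Under any
priority ordering, however, one of the two agents has no agent of higher priority; a consistent
plan must then let it reach its target at time `1` by the direct hop and keep it there. The leaf
`0` is only reachable through the centre `1`, so the other agent is blocked: if agent `0` hops to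
`1`, agent `1` can never enter `0`; if agent `1` hops to `0`, agent `0` cannot leave `0`.
-/

open SimpleGraph

theorem Collide.symm {V : Type} {π σ : ℕ → V} : Collide π σ → Collide σ π
  | .inl ⟨t, h⟩ => .inl ⟨t, h.symm⟩
  | .inr ⟨t, h₁, h₂⟩ => .inr ⟨t, h₂.symm, h₁.symm⟩

section Paths

variable {V : Type} {G : SimpleGraph V} {s t : V}

theorem IsPathFun.eq_of_arrivalTime_le {π : ℕ → V} (h : IsPathFun G s t π) {n : ℕ}
    (hn : arrivalTime t π ≤ n) : π n = t :=
  Nat.sInf_mem h.2.2 n hn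

theorem isPathFun_hop (h : G.Adj s t) : IsPathFun G s t (fun n => if n = 0 then s else t) := by
  refine ⟨rfl, fun n => ?_, 1, fun n hn => if_neg (by omega)⟩
  rcases n with _ | n
  · exact .inr (by simpa using h)
  · exact .inl (by simp)

theorem arrivalTime_hop_le_one : arrivalTime t (fun n => if n = 0 then s else t) ≤ 1 :=
  Nat.sInf_le fun _ hn => if_neg (by omega)

end Paths

theorem MAPF.Consistent.eq_target_of_adj {P : MAPF} {π : Fin P.M → ℕ → P.V}
    {r : Fin P.M → Fin P.M → Prop} (hc : P.Consistent π r) {i : Fin P.M}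
    (hπ : P.IsPath i (π i)) (hadj : P.G.Adj (P.s i) (P.t i)) (htop : ∀ j, ¬ r j i)
    {n : ℕ} (hn : 1 ≤ n) : π i n = P.t i := by
  have hle := (hc i).2 ⟨_, isPathFun_hop hadj, fun j hj => (htop j hj).elim, rfl⟩
  exact hπ.eq_of_arrivalTime_le (hle.trans (arrivalTime_hop_le_one.trans hn))

section Leaf

variable {V : Type} {G : SimpleGraph V} {u v : V} {π σ : ℕ → V}

theorem ne_leaf_of_not_collide_of_vacates (hleaf : ∀ w, G.Adj u w → w = v)
    (hπ₀ : π 0 = u) (hπ : ∀ n ≥ 1, π n = v)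
    (hσ : ∀ n, σ (n + 1) = σ n ∨ G.Adj (σ n) (σ (n + 1))) (hcol : ¬ Collide σ π) :
    ∀ n, σ n ≠ u := by
  intro n
  induction n with
  | zero => exact fun h => hcol (.inl ⟨0, h.trans hπ₀.symm⟩)
  | succ k ih =>
    intro hk
    rcases hσ k with hstay | hmove
    · exact ih (hstay ▸ hk)
    · have hσk : σ k = v := hleaf _ (hk ▸ hmove.symm)
      rcases Nat.eq_zero_or_pos k with rfl | hpos
      · exact hcol (.inr ⟨0, hσk.trans (hπ 1 le_rfl).symm, hk.trans hπ₀.symm⟩)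
      · exact hcol (.inl ⟨k, hσk.trans (hπ k hpos).symm⟩)

theorem start_ne_leaf_of_not_collide_of_enters (hleaf : ∀ w, G.Adj u w → w = v)
    (hπ₀ : π 0 = v) (hπ : ∀ n ≥ 1, π n = u) (hσ : σ 1 = σ 0 ∨ G.Adj (σ 0) (σ 1))
    (hcol : ¬ Collide σ π) : σ 0 ≠ u := by
  intro h₀
  rcases hσ with hstay | hmove
  · exact hcol (.inl ⟨1, by rw [hstay, h₀, hπ 1 le_rfl]⟩)
  · exact hcol
      (.inr ⟨0, h₀.trans (hπ 1 le_rfl).symm, (hleaf _ (h₀ ▸ hmove)).trans hπ₀.symm⟩)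

end Leaf

abbrev swapOnStar : MAPF where
  V := Fin 4
  G := starGraph 1
  conn := connected_starGraph 1
  M := 2
  s := ![0, 1]
  t := ![1, 0]
  s_inj := by decide
  t_inj := by decide

def swapPlan₀ : ℕ → Fin 4
  | 0 => 0 | 1 => 1 | 2 => 3 | _ + 3 => 1

def swapPlan₁ : ℕ → Fin 4
  | 0 => 1 | 1 => 2 | 2 => 1 | _ + 3 => 0

theorem swapOnStar_solution : swapOnStar.Solution ![swapPlan₀, swapPlan₁] := by
  have hfree : ¬ Collide swapPlan₀ swapPlan₁ := by
    rintro (⟨t, h⟩ | ⟨t, h⟩) <;> rcases t with _ | _ | _ | t <;>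
      simp [swapPlan₀, swapPlan₁] at h
  refine ⟨Fin.forall_fin_two.2 ⟨⟨rfl, fun n => ?_, 3, fun n hn => ?_⟩,
    ⟨rfl, fun n => ?_, 3, fun n hn => ?_⟩⟩, ?_⟩
  · rcases n with _ | _ | _ | n <;> simp [swapPlan₀]
  · obtain ⟨k, rfl⟩ := Nat.exists_eq_add_of_le' hn
    rfl
  · rcases n with _ | _ | _ | n <;> simp [swapPlan₁]
  · obtain ⟨k, rfl⟩ := Nat.exists_eq_add_of_le' hn
    rfl
  · simpa [Fin.forall_fin_two] using ⟨hfree, fun h => hfree h.symm⟩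

/-- There exists a solvable MAPF instance that is not P-solvable: it admits a solution,
but for every priority ordering there is no solution consistent with it. -/
theorem stmt0 :
    ∃ P : MAPF, (∃ π, P.Solution π) ∧
      ∀ r : Fin P.M → Fin P.M → Prop, IsPO r →
        ¬ ∃ π, P.Solution π ∧ P.Consistent π r := by
  refine ⟨swapOnStar, ⟨_, swapOnStar_solution⟩, ?_⟩
  rintro r ⟨hirr, htrans⟩ ⟨π, ⟨hpath, hfree⟩, hc⟩
  have hleaf : ∀ w, swapOnStar.G.Adj 0 w → w = 1 :=
    fun _ h => (starGraph_adj.1 h).2.resolve_left (by decide)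
  by_cases h10 : r 1 0
  · have htop : ∀ j, ¬ r j 1 :=
      Fin.forall_fin_two.2 ⟨fun h01 => hirr 0 (htrans _ _ _ h01 h10), hirr 1⟩
    have hparked n (hn : n ≥ 1) : π 1 n = 0 :=
      hc.eq_target_of_adj (hpath 1) (starGraph_center_adj (by decide)) htop hn
    obtain ⟨⟨σ, hσ, havoid, -⟩, -⟩ := hc 0
    exact start_ne_leaf_of_not_collide_of_enters hleaf (hpath 1).1 hparked (hσ.2.1 0)
      (havoid 1 h10) hσ.1
  · have htop : ∀ j, ¬ r j 0 := Fin.forall_fin_two.2 ⟨hirr 0, h10⟩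
    have hparked n (hn : n ≥ 1) : π 0 n = 1 :=
      hc.eq_target_of_adj (hpath 0) (starGraph_center_adj' (by decide)) htop hn
    obtain ⟨T, hT⟩ := (hpath 1).2.2
    exact ne_leaf_of_not_collide_of_vacates hleaf (hpath 0).1 hparked (hpath 1).2.1
      (hfree 1 0 (by decide)) T (hT T le_rfl)
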